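/- Let γ : I → ℝ² be a C², unit-speed (|γ'| = 1) curve on an interval I ⊆ ℝ with total curvature ∫_I |γ''(s)| ds ≤ π/4. Then for every x₀ ∈ ℝ² and every λ > 0, the Gaussian weighted length satisfies (4πλ)^{-1/2} ∫_I exp(-|γ(s)-x₀|²/(4λ)) ds ≤ √2; in particular the entropy of γ is at most √2. -/

import Mathlib

open Real MeasureTheory Set Filter
open scoped RealInnerProductSpace ENNReal

noncomputable section

/-- The Euclidean plane. -/
abbrev R2 := EuclideanSpace ℝ (Fin 2)

/-- The point of `ℝ²` with coordinates `(x, y)`. -/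
def toR2 (x y : ℝ) : R2 := (WithLp.equiv 2 (Fin 2 → ℝ)).symm ![x, y]

/-- Counterclockwise rotation of the plane by `π/2`. -/
def Jrot (v : R2) : R2 := toR2 (-(v 1)) (v 0)

/-!
Measured from a fixed tangent `T s₀`, the unit tangent `T = γ'` makes an angle `θ` with
`θ' = κ = ⟪T', Jrot T⟫`, so `|θ| ≤ ∫ |κ| ≤ π/4` and `⟪T s, T s₀⟫ = cos θ ≥ 1/√2`. Hence the
projection `f = ⟪γ - x₀, T s₀⟫` has `f' ≥ 1/√2` and `|f| ≤ ‖γ - x₀‖`; substituting `u = f s`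
bounds the Gaussian weighted length by `√2` times the full Gaussian integral `√(4πl)`.
-/

@[simp] lemma Jrot_apply_zero (v : R2) : Jrot v 0 = -v 1 := rfl
@[simp] lemma Jrot_apply_one (v : R2) : Jrot v 1 = v 0 := rfl

lemma real_inner_R2 (v w : R2) : ⟪v, w⟫ = v 0 * w 0 + v 1 * w 1 := by
  simp [PiLp.inner_apply, Fin.sum_univ_two, mul_comm]

lemma norm_sq_R2 (v : R2) : ‖v‖ ^ 2 = v 0 ^ 2 + v 1 ^ 2 := by
  rw [← real_inner_self_eq_norm_sq, real_inner_R2]; ring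

lemma Jrot_Jrot (v : R2) : Jrot (Jrot v) = -v := by
  ext i; fin_cases i <;> simp

def JrotL : R2 →L[ℝ] R2 :=
  LinearMap.toContinuousLinearMap
    { toFun := Jrot
      map_add' := fun v w => by ext i; fin_cases i <;> simp [add_comm]
      map_smul' := fun c v => by ext i; fin_cases i <;> simp }

@[simp] lemma JrotL_apply (v : R2) : JrotL v = Jrot v := rfl

lemma inner_self_Jrot (v : R2) : ⟪v, Jrot v⟫ = 0 := by
  rw [real_inner_R2, Jrot_apply_zero, Jrot_apply_one]; ring

lemma norm_Jrot (v : R2) : ‖Jrot v‖ = ‖v‖ := by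
  rw [← sq_eq_sq₀ (norm_nonneg _) (norm_nonneg _), norm_sq_R2, norm_sq_R2, Jrot_apply_zero,
    Jrot_apply_one]
  ring

lemma eq_inner_smul_add_inner_Jrot_smul {v : R2} (hv : ‖v‖ = 1) (w : R2) :
    w = ⟪w, v⟫ • v + ⟪w, Jrot v⟫ • Jrot v := by
  have h := norm_sq_R2 v
  rw [hv] at h
  ext i; fin_cases i <;> simp [real_inner_R2] <;> linear_combination w _ * h

lemma HasDerivWithinAt.inner_eq_zero_of_norm_eq_one {E : Type*} [NormedAddCommGroup E]
    [InnerProductSpace ℝ E] {T : ℝ → E} {T' : E} {s : Set ℝ} {x : ℝ}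
    (hd : HasDerivWithinAt T T' s x) (hT : ∀ t ∈ s, ‖T t‖ = 1) (hx : x ∈ s)
    (hs : UniqueDiffWithinAt ℝ s x) : ⟪T x, T'⟫ = 0 := by
  have hconst : HasDerivWithinAt (fun t => ‖T t‖ ^ 2) 0 s x :=
    (hasDerivWithinAt_const x s 1).congr (fun t ht => by simp [hT t ht]) (by simp [hT x hx])
  have := hs.eq_deriv _ hd.norm_sq hconst
  linarith

lemma HasDerivWithinAt.eq_inner_Jrot_smul_Jrot {T : ℝ → R2} {T' : R2} {s : Set ℝ} {x : ℝ}
    (hd : HasDerivWithinAt T T' s x) (hT : ∀ t ∈ s, ‖T t‖ = 1) (hx : x ∈ s)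
    (hs : UniqueDiffWithinAt ℝ s x) : T' = ⟪T', Jrot (T x)⟫ • Jrot (T x) := by
  conv_lhs => rw [eq_inner_smul_add_inner_Jrot_smul (hT x hx) T']
  rw [real_inner_comm, hd.inner_eq_zero_of_norm_eq_one hT hx hs, zero_smul, zero_add]

theorem ContinuousOn.exists_hasDerivWithinAt_Icc {f : ℝ → ℝ} {a b : ℝ} (hab : a ≤ b)
    (hf : ContinuousOn f (Icc a b)) :
    ∃ F : ℝ → ℝ, F a = 0 ∧ F b = ∫ t in a..b, f t ∧
      ∀ t ∈ Icc a b, HasDerivWithinAt F (f t) (Icc a b) t := by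
  set K := IccExtend hab ((Icc a b).domRestrict f)
  have hKf : EqOn K f (Icc a b) := fun t ht => IccExtend_of_mem hab _ ht
  refine ⟨fun t => ∫ u in a..t, K u, intervalIntegral.integral_same,
    intervalIntegral.integral_congr fun t ht => hKf (uIcc_of_le hab ▸ ht), fun t ht => ?_⟩
  exact hKf ht ▸ ((continuous_IccExtend_iff.2 hf.domRestrict).integral_hasStrictDerivAt a t
    ).hasDerivAt.hasDerivWithinAt

theorem inner_eq_cos_integral_of_norm_eq_one {T T' : ℝ → R2} {a b : ℝ} (hab : a ≤ b)
    (hd : ∀ t ∈ Icc a b, HasDerivWithinAt T (T' t) (Icc a b) t)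
    (hT : ∀ t ∈ Icc a b, ‖T t‖ = 1) (hT' : ContinuousOn T' (Icc a b)) :
    ⟪T b, T a⟫ = cos (∫ t in a..b, ⟪T' t, Jrot (T t)⟫) := by
  rcases hab.eq_or_lt with rfl | hab'
  · simp [hT a (left_mem_Icc.2 le_rfl)]
  set κ : ℝ → ℝ := fun t => ⟪T' t, Jrot (T t)⟫
  have hκ : ContinuousOn κ (Icc a b) :=
    hT'.inner (JrotL.continuous.comp_continuousOn fun t ht => (hd t ht).continuousWithinAt)
  obtain ⟨θ, hθa, hθb, hθ⟩ := hκ.exists_hasDerivWithinAt_Icc hab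
  -- `W` undoes the rotation by `θ`, so it stays at `T a`.
  set W : ℝ → R2 := fun t => cos (θ t) • T t - sin (θ t) • Jrot (T t)
  have hW : ∀ t ∈ Icc a b, HasDerivWithinAt W 0 (Icc a b) t := by
    intro t ht
    have hJ := JrotL.hasFDerivAt.comp_hasDerivWithinAt t (hd t ht)
    have h := (((hθ t ht).cos.smul (hd t ht)).sub ((hθ t ht).sin.smul hJ))
    have hT't : T' t = κ t • Jrot (T t) :=
      (hd t ht).eq_inner_Jrot_smul_Jrot hT ht (uniqueDiffOn_Icc hab' t ht)
    refine h.congr_deriv ?_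
    simp only [hT't, Function.comp_apply, map_smul, JrotL_apply, Jrot_Jrot]
    module
  have hWab : W b = W a := by
    have := (convex_Icc a b).norm_image_sub_le_of_norm_hasDerivWithin_le (C := 0) hW
      (fun _ _ => by simp) (left_mem_Icc.2 hab) (right_mem_Icc.2 hab)
    simpa [sub_eq_zero] using this
  have hWa : W a = T a := by simp [W, hθa]
  rw [← hθb, ← hWa, ← hWab]
  simp [W, inner_sub_right, real_inner_smul_right, hT b (right_mem_Icc.2 hab), inner_self_Jrot]

theorem cos_le_inner_of_lintegral_norm_deriv_le {T T' : ℝ → R2} {a b L : ℝ} (hab : a ≤ b)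
    (hd : ∀ t ∈ Icc a b, HasDerivWithinAt T (T' t) (Icc a b) t)
    (hT : ∀ t ∈ Icc a b, ‖T t‖ = 1) (hT' : ContinuousOn T' (Icc a b)) (hL₀ : 0 ≤ L) (hLπ : L ≤ π)
    (hlen : ∫⁻ t in Icc a b, ‖T' t‖ₑ ≤ ENNReal.ofReal L) : cos L ≤ ⟪T b, T a⟫ := by
  have hint : IntegrableOn T' (Icc a b) := hT'.integrableOn_Icc
  have hlenR : ∫ t in a..b, ‖T' t‖ ≤ L := by
    rw [intervalIntegral.integral_of_le hab, ← integral_Icc_eq_integral_Ioc,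
      ← ENNReal.ofReal_le_ofReal_iff hL₀, ofReal_integral_norm_eq_lintegral_enorm hint]
    exact hlen
  have hangle : |∫ t in a..b, ⟪T' t, Jrot (T t)⟫| ≤ L := by
    rw [← Real.norm_eq_abs]
    refine le_trans (intervalIntegral.norm_integral_le_of_norm_le hab ?_ ?_) hlenR
    · refine ae_of_all _ fun t ht => ?_
      have := norm_inner_le_norm (𝕜 := ℝ) (T' t) (Jrot (T t))
      rwa [norm_Jrot, hT t (Ioc_subset_Icc_self ht), mul_one] at this
    · exact hT'.norm.intervalIntegrable_of_Icc hab
  calc cos L ≤ cos |∫ t in a..b, ⟪T' t, Jrot (T t)⟫| :=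
        cos_le_cos_of_nonneg_of_le_pi (abs_nonneg _) hLπ hangle
    _ = ⟪T b, T a⟫ := by rw [cos_abs, inner_eq_cos_integral_of_norm_eq_one hab hd hT hT']

theorem Set.OrdConnected.cos_le_inner_of_lintegral_norm_deriv_le {T T' : ℝ → R2} {I : Set ℝ}
    {L : ℝ} (hI : OrdConnected I)
    (hd : ∀ t ∈ I, HasDerivWithinAt T (T' t) I t) (hT : ∀ t ∈ I, ‖T t‖ = 1)
    (hT' : ContinuousOn T' I) (hL₀ : 0 ≤ L) (hLπ : L ≤ π)
    (hlen : ∫⁻ t in I, ‖T' t‖ₑ ≤ ENNReal.ofReal L) {s t : ℝ} (hs : s ∈ I) (ht : t ∈ I) :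
    cos L ≤ ⟪T s, T t⟫ := by
  wlog hts : t ≤ s generalizing s t
  · rw [real_inner_comm]
    exact this ht hs (le_of_not_ge hts)
  have hsub : Icc t s ⊆ I := hI.out ht hs
  exact _root_.cos_le_inner_of_lintegral_norm_deriv_le hts
    (fun u hu => (hd u (hsub hu)).mono hsub) (fun u hu => hT u (hsub hu)) (hT'.mono hsub) hL₀ hLπ
    ((lintegral_mono_set hsub).trans hlen)

theorem lintegral_comp_le_of_le_deriv {f f' : ℝ → ℝ} {I : Set ℝ} {c : ℝ} (hI : OrdConnected I)
    (hf : ∀ s ∈ I, HasDerivWithinAt f (f' s) I s) (hc : 0 < c) (hcf : ∀ s ∈ I, c ≤ f' s)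
    (g : ℝ → ℝ≥0∞) : ∫⁻ s in I, g (f s) ≤ ENNReal.ofReal c⁻¹ * ∫⁻ u, g u := by
  have hmono : MonotoneOn f I :=
    monotoneOn_of_hasDerivWithinAt_nonneg hI.convex (fun s hs => (hf s hs).continuousWithinAt)
      (fun s hs => (hf s (interior_subset hs)).mono interior_subset)
      (fun s hs => hc.le.trans (hcf s (interior_subset hs)))
  have hpt : ∀ s ∈ I, g (f s) ≤ ENNReal.ofReal c⁻¹ * (ENNReal.ofReal (f' s) * g (f s)) := by
    intro s hs
    rw [← mul_assoc, ← ENNReal.ofReal_mul (inv_nonneg.2 hc.le)]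
    refine le_mul_of_one_le_left zero_le (ENNReal.one_le_ofReal.2 ?_)
    rw [inv_mul_eq_div, one_le_div hc]
    exact hcf s hs
  calc ∫⁻ s in I, g (f s)
      ≤ ∫⁻ s in I, ENNReal.ofReal c⁻¹ * (ENNReal.ofReal (f' s) * g (f s)) :=
        setLIntegral_mono' hI.measurableSet hpt
    _ = ENNReal.ofReal c⁻¹ * ∫⁻ u in f '' I, g u := by
        rw [lintegral_const_mul' _ _ ENNReal.ofReal_ne_top,
          lintegral_image_eq_lintegral_deriv_mul_of_monotoneOn hI.measurableSet hf hmono]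
    _ ≤ ENNReal.ofReal c⁻¹ * ∫⁻ u, g u := by
        gcongr
        exact Measure.restrict_le_self

lemma lintegral_exp_neg_sq_div {l : ℝ} (hl : 0 < l) :
    ∫⁻ u : ℝ, ENNReal.ofReal (exp (-u ^ 2 / (4 * l))) = ENNReal.ofReal √(4 * π * l) := by
  have hb : 0 < (4 * l)⁻¹ := by positivity
  have he : ∀ u : ℝ, -u ^ 2 / (4 * l) = -(4 * l)⁻¹ * u ^ 2 := fun u => by ring
  simp only [he]
  rw [← ofReal_integral_eq_lintegral_ofReal (integrable_exp_neg_mul_sq hb)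
    (ae_of_all _ fun u => (exp_pos _).le), integral_gaussian, div_inv_eq_mul, mul_left_comm,
    mul_assoc]

/-- A `C²` unit-speed planar curve on an interval `I` with total curvature
at most `π/4` has all Gaussian weighted lengths, hence entropy, at most `√2`. -/
theorem entropy_le_sqrt_two_of_total_curvature_le
    (γ : ℝ → R2) (I : Set ℝ) (hI : OrdConnected I)
    (hγ : ContDiffOn ℝ 2 γ I)
    (hunit : ∀ s ∈ I, ‖derivWithin γ I s‖ = 1)
    (hTC : ∫⁻ s in I, (‖derivWithin (derivWithin γ I) I s‖₊ : ℝ≥0∞)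
      ≤ ENNReal.ofReal (π / 4)) :
    ∀ x₀ : R2, ∀ l : ℝ, 0 < l →
      (ENNReal.ofReal (Real.sqrt (4 * π * l)))⁻¹ *
        (∫⁻ s in I, ENNReal.ofReal (Real.exp (-‖γ s - x₀‖ ^ 2 / (4 * l))))
      ≤ ENNReal.ofReal (Real.sqrt 2) := by
  intro x₀ l hl
  rcases I.subsingleton_or_nontrivial with hsub | hnt
  · simp [Measure.restrict_eq_zero.2 (hsub.measure_zero volume)]
  obtain ⟨s₀, hs₀⟩ := hnt.nonempty
  have hUD : UniqueDiffOn ℝ I :=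
    uniqueDiffOn_convex hI.convex (hI.convex.nontrivial_iff_nonempty_interior.1 hnt)
  set T := derivWithin γ I
  have hT : ContDiffOn ℝ 1 T I := hγ.derivWithin hUD (by norm_num)
  have hcone : ∀ s ∈ I, √2 / 2 ≤ ⟪T s, T s₀⟫ := fun s hs => cos_pi_div_four ▸
    hI.cos_le_inner_of_lintegral_norm_deriv_le
      (fun t ht => ((hT.differentiableOn one_ne_zero) t ht).hasDerivWithinAt) hunit
      (hT.continuousOn_derivWithin hUD le_rfl) (by positivity) (by linarith [pi_pos]) hTC hs hs₀
  set f : ℝ → ℝ := fun s => ⟪γ s - x₀, T s₀⟫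
  have hf : ∀ s ∈ I, HasDerivWithinAt f ⟪T s, T s₀⟫ I s := fun s hs =>
    ((((hγ.differentiableOn (by norm_num)) s hs).hasDerivWithinAt).sub_const x₀).inner ℝ
      (hasDerivWithinAt_const s I (T s₀)) |>.congr_deriv (by rw [inner_zero_right, zero_add])
  have hproj : ∀ s, f s ^ 2 ≤ ‖γ s - x₀‖ ^ 2 := fun s => by
    simpa [hunit s₀ hs₀, sq_abs] using
      pow_le_pow_left₀ (abs_nonneg _) (abs_real_inner_le_norm (γ s - x₀) (T s₀)) 2
  have hgauss := lintegral_exp_neg_sq_div hl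
  set G := ENNReal.ofReal √(4 * π * l)
  calc G⁻¹ * ∫⁻ s in I, ENNReal.ofReal (exp (-‖γ s - x₀‖ ^ 2 / (4 * l)))
      ≤ G⁻¹ * ∫⁻ s in I, ENNReal.ofReal (exp (-f s ^ 2 / (4 * l))) := by
        gcongr _ * ∫⁻ s in I, ENNReal.ofReal (exp ?_) with s
        exact div_le_div_of_nonneg_right (neg_le_neg (hproj s)) (by positivity)
    _ ≤ G⁻¹ * (ENNReal.ofReal (√2 / 2)⁻¹ * G) := by
        rw [← hgauss]
        gcongr
        exact lintegral_comp_le_of_le_deriv hI hf (by positivity) hcone _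
    _ = ENNReal.ofReal √2 := by
        have hG : G ≠ 0 := (ENNReal.ofReal_pos.2 (by positivity)).ne'
        rw [inv_div, div_sqrt, mul_left_comm, ENNReal.inv_mul_cancel hG ENNReal.ofReal_ne_top,
          mul_one]
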